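/- arXiv:1808.06033 — 2 statements merged into one kernel-verified Lean document; each statement's English description precedes it below -/
import Mathlib

section
/- Let A be a left-symmetric conformal algebra and (M, l_A, r_A) a finite module over A. Then ρ := l_A - r_A is a representation of the sub-adjacent Lie conformal algebra g(A) on M, i.e. ρ([a_λ b])_{λ+μ} v = ρ(a)_λ(ρ(b)_μ v) - ρ(b)_μ(ρ(a)_λ v), where [a_λ b] = a_λ b - b_{-λ-∂} a. -/
open Finsupp

noncomputable section

/-- Coefficient of `λ^k` of the substitution `μ ↦ -λ-∂` applied to the polynomial
`Σₙ μ^n • (f n)` with coefficients in `A` (with `∂` acting on the coefficients). -/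
def csubst {A : Type} [AddCommGroup A] [Module ℂ A]
    (D : Module.End ℂ A) (f : ℕ →₀ A) (k : ℕ) : A :=
  f.sum fun n c => ((-1 : ℂ) ^ n * (n.choose k : ℂ)) • (D ^ (n - k)) c

/-- Coefficient of `λ^n μ^m` of `(a_λ b)_{λ+μ} c`, for a λ-product `m₁` on `A`
and a λ-action `m₂` of `A` on `V`. -/
def comp2 {A V : Type} [AddCommGroup A] [Module ℂ A] [AddCommGroup V] [Module ℂ V]
    (m₁ : A →ₗ[ℂ] A →ₗ[ℂ] (ℕ →₀ A)) (m₂ : A →ₗ[ℂ] V →ₗ[ℂ] (ℕ →₀ V))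
    (a b : A) (c : V) (n m : ℕ) : V :=
  ∑ i ∈ Finset.range (n + 1),
    (((m + n - i).choose (n - i) : ℕ) : ℂ) • m₂ (m₁ a b i) c (m + n - i)

/-- A conformal algebra: a `ℂ[∂]`-module with a sesquilinear λ-product,
encoded coefficientwise: `mul a b n` is the coefficient of `λ^n` in `a_λ b`. -/
structure ConfAlg (A : Type) [AddCommGroup A] [Module ℂ A] where
  D : Module.End ℂ A
  mul : A →ₗ[ℂ] A →ₗ[ℂ] (ℕ →₀ A)
  sesq_left_zero : ∀ a b, mul (D a) b 0 = 0
  sesq_left : ∀ a b n, mul (D a) b (n + 1) = - mul a b n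
  sesq_right_zero : ∀ a b, mul a (D b) 0 = D (mul a b 0)
  sesq_right : ∀ a b n, mul a (D b) (n + 1) = D (mul a b (n + 1)) + mul a b n

/-- A Lie conformal algebra: skew-symmetry `[a_λ b] = -[b_{-λ-∂} a]` and the
Jacobi identity `[a_λ[b_μ c]] = [[a_λ b]_{λ+μ} c] + [b_μ[a_λ c]]`, coefficientwise. -/
structure LieConfAlg (A : Type) [AddCommGroup A] [Module ℂ A] extends ConfAlg A where
  skew : ∀ a b k, mul a b k = - csubst D (mul b a) k
  jacobi : ∀ a b c n m,
    mul a (mul b c m) n = comp2 mul mul a b c n m + mul b (mul a c n) m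

/-- A left-symmetric conformal algebra:
`(a_λ b)_{λ+μ} c - a_λ(b_μ c) = (b_μ a)_{λ+μ} c - b_μ(a_λ c)`, coefficientwise. -/
structure LSConfAlg (A : Type) [AddCommGroup A] [Module ℂ A] extends ConfAlg A where
  lsym : ∀ a b c n m,
    comp2 mul mul a b c n m - mul a (mul b c m) n
      = comp2 mul mul b a c m n - mul b (mul a c n) m

/-- Coefficient of `λ^p μ^q` of the substitution `ν ↦ -λ-μ-∂` applied to
`Σⱼ ν^j • (f j)`. -/
def csubst2 {M : Type} [AddCommGroup M] [Module ℂ M]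
    (D : Module.End ℂ M) (f : ℕ →₀ M) (p q : ℕ) : M :=
  f.sum fun j c =>
    ((-1 : ℂ) ^ j * (j.choose p : ℂ) * ((j - p).choose q : ℂ)) • (D ^ (j - p - q)) c

/-- A module `(M, l, r)` over a left-symmetric conformal algebra `S`,
encoded coefficientwise (with `r a` encoding `r_A(a)_λ`). -/
structure LSConfMod {A : Type} [AddCommGroup A] [Module ℂ A]
    (S : LSConfAlg A) (M : Type) [AddCommGroup M] [Module ℂ M] where
  DM : Module.End ℂ M
  l : A →ₗ[ℂ] M →ₗ[ℂ] (ℕ →₀ M)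
  r : A →ₗ[ℂ] M →ₗ[ℂ] (ℕ →₀ M)
  l_sesq_left_zero : ∀ a v, l (S.D a) v 0 = 0
  l_sesq_left : ∀ a v n, l (S.D a) v (n + 1) = - l a v n
  l_sesq_right_zero : ∀ a v, l a (DM v) 0 = DM (l a v 0)
  l_sesq_right : ∀ a v n, l a (DM v) (n + 1) = DM (l a v (n + 1)) + l a v n
  r_sesq_left_zero : ∀ a v, r (S.D a) v 0 = 0
  r_sesq_left : ∀ a v n, r (S.D a) v (n + 1) = - r a v n
  r_sesq_right_zero : ∀ a v, r a (DM v) 0 = DM (r a v 0)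
  r_sesq_right : ∀ a v n, r a (DM v) (n + 1) = DM (r a v (n + 1)) + r a v n
  compat_l : ∀ a b v n m,
    comp2 S.mul l a b v n m - l a (l b v m) n
      = comp2 S.mul l b a v m n - l b (l a v n) m
  compat_r : ∀ a b v n m,
    (∑ i ∈ Finset.range (n + 1), csubst2 DM (r b (l a v i)) (n - i) m)
        - l a (csubst DM (r b v) m) n
      = (∑ i ∈ Finset.range (n + 1), csubst2 DM (r b (r a v i)) (n - i) m)
        - csubst DM (r (S.mul a b n) v) m

/-!
Expanding `ρ = l - r` and `[a_λ b] = a_λ b - b_{-λ-∂} a`, left sesquilinearity turns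
`X(b_{-λ-∂} a)_{λ+μ}` into `X(b_μ a)_{λ+μ}` for `X = l, r`, and the `l`-terms are then matched
by the first module axiom. The second module axiom is stated with `r(b)_{-λ-μ-∂}` and
`r(a_λ b)_{-μ-∂}`; undoing the substitution by `μ ↦ -λ-μ-∂` (an involution, checked on
coefficients through alternating binomial sums) turns it into
`r(a_λ b)_{λ+μ} v = r(b)_μ r(a)_λ v - r(b)_μ l(a)_λ v + l(a)_λ r(b)_μ v`,
which supplies the `r`-terms.
-/

section Sums

open Finset

variable {R : Type*} [CommRing R]

theorem Nat.choose_mul_choose_sub_comm (n a b : ℕ) :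
    n.choose a * (n - a).choose b = n.choose b * (n - b).choose a :=
  calc n.choose a * (n - a).choose b = n.choose (a + b) * (a + b).choose a := by
        rw [Nat.choose_mul (Nat.le_add_right a b), Nat.add_sub_cancel_left]
    _ = n.choose (a + b) * (a + b).choose b := by rw [Nat.choose_symm_add]
    _ = n.choose b * (n - b).choose a := by
        rw [Nat.choose_mul (Nat.le_add_left b a), Nat.add_sub_cancel]

theorem alternating_sum_choose_of_le {N B : ℕ} (h : N ≤ B) :
    ∑ i ∈ range (B + 1), (-1 : R) ^ i * (N.choose i : R) = if N = 0 then 1 else 0 := by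
  have key := congrArg (Int.cast : ℤ → R) (Int.alternating_sum_range_choose (n := N))
  push_cast [apply_ite (Int.cast : ℤ → R)] at key
  rw [← key]
  refine (sum_subset (range_subset_range.2 (by omega)) fun i hi hiN => ?_).symm
  rw [mem_range] at hi hiN
  rw [Nat.choose_eq_zero_of_lt (by omega), Nat.cast_zero, mul_zero]

theorem sum_range_eq_sum_range_add_of_eq_zero {M : Type*} [AddCommMonoid M] {F : ℕ → M}
    {s N : ℕ} (hF : ∀ k < s, F k = 0) (hs : s ≤ N) :
    ∑ k ∈ range N, F k = ∑ u ∈ range (N - s), F (s + u) := by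
  conv_lhs => rw [← Nat.add_sub_cancel' hs]
  rw [sum_range_add, sum_eq_zero fun k hk => hF k (mem_range.1 hk), zero_add]

theorem sum_range_eq_sum_support_ite {M N : Type*} [Zero M] [AddCommMonoid N] (f : ℕ →₀ M)
    (g : ℕ → M → N) (hg : ∀ j, g j 0 = 0) (m : ℕ) :
    ∑ i ∈ range (m + 1), g i (f i) = ∑ j ∈ f.support, if j ≤ m then g j (f j) else 0 := by
  rw [← Finset.sum_filter]
  refine (sum_subset (fun j hj => ?_) fun j hj hjf => ?_).symm
  · exact mem_range.2 (Nat.lt_succ_of_le (mem_filter.1 hj).2)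
  · have : f j = 0 := by simpa [Nat.lt_succ_iff.1 (mem_range.1 hj)] using hjf
    rw [this, hg]

theorem alternating_sum_choose_mul_choose_mul_choose {j s m B : ℕ} (h : j ≤ B) :
    ∑ k ∈ range (B + 1),
        (-1 : R) ^ k * (j.choose k : R) * (k.choose s : R) * ((k - s).choose m : R)
      = if j = s + m then (-1 : R) ^ j * (j.choose s : R) else 0 := by
  by_cases hjsm : s + m ≤ j
  · have hterm : ∀ u, (-1 : R) ^ (s + m + u) * (j.choose (s + m + u) : R)
          * ((s + m + u).choose s : R) * ((s + m + u - s).choose m : R)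
        = (-1 : R) ^ (s + m) * (j.choose s * (j - s).choose m : ℕ)
          * ((-1 : R) ^ u * ((j - s - m).choose u : R)) := by
      intro u
      have h1 : (j.choose (s + m + u) : R) * ((s + m + u).choose s : R)
          = (j.choose s : R) * ((j - s).choose (m + u) : R) := by
        have := Nat.choose_mul (n := j) (k := s + m + u) (s := s) (by omega)
        rw [show s + m + u - s = m + u by omega] at this
        rw [← Nat.cast_mul, ← Nat.cast_mul, this]
      have h2 : ((j - s).choose (m + u) : R) * ((m + u).choose m : R)
          = ((j - s).choose m : R) * ((j - s - m).choose u : R) := by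
        have := Nat.choose_mul (n := j - s) (k := m + u) (s := m) (by omega)
        rw [Nat.add_sub_cancel_left] at this
        rw [← Nat.cast_mul, ← Nat.cast_mul, this]
      rw [show s + m + u - s = m + u by omega, pow_add]
      push_cast
      linear_combination ((-1 : R) ^ (s + m) * (-1 : R) ^ u * ((m + u).choose m : R)) * h1
        + ((-1 : R) ^ (s + m) * (-1 : R) ^ u * (j.choose s : R)) * h2
    rw [sum_range_eq_sum_range_add_of_eq_zero (s := s + m) ?_ (by omega)]
    · simp_rw [hterm]
      rw [← Finset.mul_sum, show B + 1 - (s + m) = (B - (s + m)) + 1 by omega,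
        alternating_sum_choose_of_le (by omega)]
      by_cases hj : j = s + m
      · subst hj
        simp
      · rw [if_neg (by omega), if_neg hj, mul_zero]
    · intro k hk
      rcases lt_or_ge k s with hks | hks
      · rw [Nat.choose_eq_zero_of_lt hks]; simp
      · rw [Nat.choose_eq_zero_of_lt (show k - s < m by omega)]; simp
  · rw [if_neg (by omega)]
    refine sum_eq_zero fun k _ => ?_
    rcases lt_or_ge j k with hjk | hkj
    · rw [Nat.choose_eq_zero_of_lt hjk]; simp
    rcases lt_or_ge k s with hks | hks
    · rw [Nat.choose_eq_zero_of_lt hks]; simp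
    · rw [Nat.choose_eq_zero_of_lt (show k - s < m by omega)]; simp

open Polynomial in
theorem alternating_sum_choose_mul_choose_add_sub {j n m : ℕ} (h : j ≤ m + n) :
    ∑ i ∈ range (n + 1), (-1 : R) ^ i * (j.choose i : R) * ((m + n - i).choose (n - i) : R)
      = ((m + n - j).choose n : R) := by
  have hpoly : (X + 1 : R[X]) ^ (m + n - j) * X ^ j
      = ∑ i ∈ range (j + 1), C ((-1 : R) ^ i * (j.choose i : R)) * (X + 1) ^ (m + n - i) := by
    have hX := add_pow (-1 : R[X]) (X + 1) j
    rw [show (-1 : R[X]) + (X + 1) = X by ring] at hX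
    rw [hX, Finset.mul_sum]
    refine sum_congr rfl fun i hi => ?_
    rw [show m + n - i = (m + n - j) + (j - i) by have := mem_range.1 hi; omega, pow_add]
    simp only [map_mul, map_pow, map_neg, map_one, map_natCast]
    ring
  have hcoeff := congrArg (coeff · m) hpoly
  simp only [coeff_mul_X_pow', coeff_X_add_one_pow, finsetSum_coeff, coeff_C_mul] at hcoeff
  have hlhs : (if j ≤ m then (((m + n - j).choose (m - j) : ℕ) : R) else 0)
      = ((m + n - j).choose n : R) := by
    split_ifs with hjm
    · rw [← Nat.choose_symm (by omega), show m + n - j - (m - j) = n by omega]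
    · rw [Nat.choose_eq_zero_of_lt (by omega), Nat.cast_zero]
  rw [hlhs] at hcoeff
  rw [hcoeff, sum_subset (range_subset_range.2 (by omega : j + 1 ≤ m + n + 1)) (fun i hi hij => by
      rw [mem_range] at hi hij
      rw [Nat.choose_eq_zero_of_lt (by omega : j < i)]; simp),
    ← sum_subset (range_subset_range.2 (by omega : n + 1 ≤ m + n + 1)) (fun i hi hin => by
      rw [mem_range] at hi hin
      rw [Nat.choose_eq_zero_of_lt (by omega : m + n - i < m)]; simp)]
  refine sum_congr rfl fun i hi => ?_
  rw [← Nat.choose_symm (by omega : n - i ≤ m + n - i), show m + n - i - (n - i) = m by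
    have := mem_range.1 hi; omega]

end Sums

section Substitution

open Finset

variable {M : Type} [AddCommGroup M] [Module ℂ M]

/-- The coefficient of `λ^p μ^q` in `(-λ-μ-∂)^j`. -/
def negShift (D : Module.End ℂ M) (j p q : ℕ) : Module.End ℂ M :=
  ((-1 : ℂ) ^ j * (j.choose p : ℂ) * ((j - p).choose q : ℂ)) • D ^ (j - p - q)

theorem csubst2_eq_sum (D : Module.End ℂ M) (f : ℕ →₀ M) (p q : ℕ) :
    csubst2 D f p q = ∑ j ∈ f.support, negShift D j p q (f j) :=
  rfl

theorem csubst_eq_csubst2_zero (D : Module.End ℂ M) (f : ℕ →₀ M) (k : ℕ) :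
    csubst D f k = csubst2 D f 0 k := by
  simp [csubst, csubst2]

theorem negShift_negShift (D : Module.End ℂ M) (j q k s m : ℕ) (x : M) :
    negShift D k s m (negShift D j q k x)
      = ((-1 : ℂ) ^ j * (j.choose q : ℂ)
          * ((-1 : ℂ) ^ k * ((j - q).choose k : ℂ) * (k.choose s : ℂ) * ((k - s).choose m : ℂ)))
        • (D ^ (j - q - s - m)) x := by
  simp only [negShift, LinearMap.smul_apply, map_smul, smul_smul, ← Module.End.mul_apply,
    ← pow_add]
  by_cases hk : s + m ≤ k ∧ k ≤ j - q
  · rw [show k - s - m + (j - q - k) = j - q - s - m by omega]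
    ring_nf
  · rcases lt_or_ge k s with hks | hks
    · simp [Nat.choose_eq_zero_of_lt hks]
    rcases lt_or_ge (k - s) m with hksm | hksm
    · simp [Nat.choose_eq_zero_of_lt hksm]
    · simp [Nat.choose_eq_zero_of_lt (show j - q < k by omega)]

theorem sum_support_ite_eq_smul (f : ℕ →₀ M) (N : ℕ) (c : ℂ) :
    ∑ j ∈ f.support, (if j = N then c • f j else 0) = c • f N := by
  rw [Finset.sum_ite_eq']
  split_ifs with hN
  · rfl
  · rw [Finsupp.notMem_support_iff.1 hN, smul_zero]

theorem sum_negShift_csubst2 (D : Module.End ℂ M) (f : ℕ →₀ M) {q s m B : ℕ}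
    (hB : ∀ j ∈ f.support, j ≤ B) :
    ∑ k ∈ range (B + 1), negShift D k s m (csubst2 D f q k)
      = ((-1 : ℂ) ^ q * ((q + s + m).choose q : ℂ) * ((s + m).choose s : ℂ))
        • f (q + s + m) := by
  simp_rw [csubst2_eq_sum, map_sum, negShift_negShift]
  rw [Finset.sum_comm, ← sum_support_ite_eq_smul]
  refine sum_congr rfl fun j hj => ?_
  rw [← sum_smul, ← Finset.mul_sum,
    alternating_sum_choose_mul_choose_mul_choose (by have := hB j hj; omega)]
  by_cases hjq : j = q + s + m
  · subst hjq
    rw [if_pos (by omega), if_pos rfl, show q + s + m - q - s - m = 0 by omega, pow_zero,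
      Module.End.one_apply, show q + s + m - q = s + m by omega]
    congr 1
    have hsign : (-1 : ℂ) ^ (q + s + m) * (-1 : ℂ) ^ (s + m) = (-1 : ℂ) ^ q := by
      rw [← pow_add]; exact neg_one_pow_congr (by simp only [Nat.even_iff]; omega)
    linear_combination ((q + s + m).choose q * (s + m).choose s : ℂ) * hsign
  · rw [if_neg hjq]
    split_ifs with h
    · rw [Nat.choose_eq_zero_of_lt (show j < q by omega)]; simp
    · simp

/-- The coefficient of `λ^n μ^m` after substituting `ν ↦ -λ-μ-∂` in `Σ_{p, k ≤ B} λ^p ν^k g p k`.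
Up to the truncation `B`, it inverts the substitutions `csubst` and `csubst2`. -/
def resubst (D : Module.End ℂ M) (B : ℕ) (g : ℕ → ℕ → M) (n m : ℕ) : M :=
  ∑ p ∈ range (n + 1), ∑ k ∈ range (B + 1), negShift D k (n - p) m (g p k)

theorem resubst_sub (D : Module.End ℂ M) (B : ℕ) (g g' : ℕ → ℕ → M) (n m : ℕ) :
    resubst D B (fun p k => g p k - g' p k) n m = resubst D B g n m - resubst D B g' n m := by
  simp only [resubst, map_sub, sum_sub_distrib]

theorem resubst_convolution (D : Module.End ℂ M) (B : ℕ) (g : ℕ → ℕ → ℕ → M) (n m : ℕ) :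
    resubst D B (fun p k => ∑ i ∈ range (p + 1), g i (p - i) k) n m
      = ∑ i ∈ range (n + 1), resubst D B (g i) (n - i) m := by
  simp only [resubst, map_sum]
  simp_rw [Finset.sum_comm (s := range (B + 1))]
  rw [Finset.sum_comm' (t' := range (n + 1)) (s' := fun i => Ico i (n + 1))
    fun p i => by simp only [mem_range, mem_Ico]; omega]
  refine sum_congr rfl fun i hi => ?_
  rw [sum_Ico_eq_sum_range, show n + 1 - i = n - i + 1 by have := mem_range.1 hi; omega]
  refine sum_congr rfl fun q _ => ?_
  rw [Nat.add_sub_cancel_left, Nat.sub_add_eq]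

theorem resubst_csubst2 (D : Module.End ℂ M) (f : ℕ →₀ M) {B : ℕ}
    (hB : ∀ j ∈ f.support, j ≤ B) (n m : ℕ) :
    resubst D B (fun q k => csubst2 D f q k) n m = if n = 0 then f m else 0 := by
  have hterm : ∀ q ∈ range (n + 1),
      ∑ k ∈ range (B + 1), negShift D k (n - q) m (csubst2 D f q k)
        = ((-1 : ℂ) ^ q * ((m + n).choose q : ℂ) * ((m + n - q).choose (n - q) : ℂ))
          • f (n + m) := by
    intro q hq
    have := mem_range.1 hq
    rw [sum_negShift_csubst2 D f hB, show q + (n - q) + m = n + m by omega,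
      show n - q + m = m + n - q by omega, show n + m = m + n by omega]
  rw [resubst, sum_congr rfl hterm, ← sum_smul,
    alternating_sum_choose_mul_choose_add_sub le_rfl, Nat.sub_self]
  split_ifs with hn
  · rw [hn, Nat.choose_self, Nat.cast_one, one_smul, zero_add]
  · rw [Nat.choose_eq_zero_of_lt (Nat.pos_of_ne_zero hn), Nat.cast_zero, zero_smul]

theorem resubst_sum_csubst2 (D : Module.End ℂ M) (h : ℕ → ℕ →₀ M) {n B : ℕ}
    (hB : ∀ i ≤ n, ∀ j ∈ (h i).support, j ≤ B) (m : ℕ) :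
    resubst D B (fun p k => ∑ i ∈ range (p + 1), csubst2 D (h i) (p - i) k) n m = h n m := by
  rw [resubst_convolution, sum_eq_single_of_mem n (self_mem_range_succ n)]
  · rw [resubst_csubst2 D (h n) (hB n le_rfl), if_pos (Nat.sub_self n)]
  · intro i hi hin
    have := mem_range.1 hi
    rw [resubst_csubst2 D (h i) (hB i (by omega)), if_neg (by omega)]

theorem resubst_csubst (D : Module.End ℂ M) (h : ℕ → ℕ →₀ M) {n B : ℕ}
    (hB : ∀ p ≤ n, ∀ j ∈ (h p).support, j ≤ B) (m : ℕ) :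
    resubst D B (fun p k => csubst D (h p) k) n m
      = ∑ p ∈ range (n + 1), (((m + n - p).choose (n - p) : ℕ) : ℂ) • h p (m + n - p) := by
  refine sum_congr rfl fun p hp => ?_
  have := mem_range.1 hp
  simp_rw [csubst_eq_csubst2_zero]
  rw [sum_negShift_csubst2 D (h p) (hB p (by omega)), show 0 + (n - p) + m = m + n - p by omega,
    show n - p + m = m + n - p by omega]
  simp

end Substitution

section Sesquilinear

open Finset

variable {A M : Type} [AddCommGroup A] [Module ℂ A] [AddCommGroup M] [Module ℂ M]

theorem apply_pow_left_eq (D : Module.End ℂ A) (l : A →ₗ[ℂ] M →ₗ[ℂ] (ℕ →₀ M))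
    (h0 : ∀ c v, l (D c) v 0 = 0) (h1 : ∀ c v k, l (D c) v (k + 1) = - l c v k)
    (s : ℕ) (c : A) (v : M) (k : ℕ) :
    l ((D ^ s) c) v k = if s ≤ k then ((-1 : ℂ) ^ s) • l c v (k - s) else 0 := by
  induction s generalizing c k with
  | zero => simp
  | succ s ih =>
    rw [pow_succ, Module.End.mul_apply, ih]
    by_cases hsk : s + 1 ≤ k
    · rw [if_pos (by omega), if_pos hsk, show k - s = k - (s + 1) + 1 by omega, h1, pow_succ,
        mul_smul, neg_one_smul, smul_neg]
    · rw [if_neg hsk]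
      split_ifs with hs
      · rw [show k - s = 0 by omega, h0, smul_zero]
      · rfl

theorem apply_pow_right_eq (D : Module.End ℂ M) (φ : M →ₗ[ℂ] (ℕ →₀ M))
    (h0 : ∀ v, φ (D v) 0 = D (φ v 0)) (h1 : ∀ v k, φ (D v) (k + 1) = D (φ v (k + 1)) + φ v k)
    (s : ℕ) (v : M) (p : ℕ) :
    φ ((D ^ s) v) p
      = ∑ t ∈ range (p + 1), ((s.choose t : ℕ) : ℂ) • (D ^ (s - t)) (φ v (p - t)) := by
  induction s generalizing p with
  | zero =>
    rw [sum_eq_single_of_mem 0 (mem_range.2 p.succ_pos)]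
    · simp
    · intro t _ ht
      rw [Nat.choose_eq_zero_of_lt (Nat.pos_of_ne_zero ht), Nat.cast_zero, zero_smul]
  | succ s ih =>
    rw [pow_succ', Module.End.mul_apply]
    have hD : ∀ t, D (((s.choose t : ℕ) : ℂ) • (D ^ (s - t)) (φ v (p - t)))
        = ((s.choose t : ℕ) : ℂ) • (D ^ (s + 1 - t)) (φ v (p - t)) := by
      intro t
      rcases Nat.lt_or_ge s t with hst | hts
      · rw [Nat.choose_eq_zero_of_lt hst, Nat.cast_zero, zero_smul, zero_smul, map_zero]
      · rw [map_smul, ← Module.End.mul_apply, ← pow_succ', show s - t + 1 = s + 1 - t by omega]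
    cases p with
    | zero =>
      rw [h0, ih, sum_range_one, sum_range_one, hD 0]
      simp
    | succ q =>
      rw [h1, ih, ih, map_sum, sum_congr rfl fun t _ => hD t,
        sum_range_succ' _ (q + 1), sum_range_succ' _ (q + 1)]
      simp only [Nat.choose_succ_succ, Nat.cast_add, add_smul, sum_add_distrib,
        Nat.choose_zero_right, Nat.succ_sub_succ, Nat.sub_zero]
      abel

/-- Right sesquilinearity moves `∂` out of `φ_λ` as `∂ + λ`, so that `φ_λ(y(-ν-∂))` is
`Σ_i λ^i g_i(-λ-ν-∂)` with `g_i(ν) = Σ_j ν^j φ(y_j)_i`. -/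
theorem apply_csubst_eq_sum_csubst2 (D : Module.End ℂ M) (φ : M →ₗ[ℂ] (ℕ →₀ M))
    (h0 : ∀ v, φ (D v) 0 = D (φ v 0)) (h1 : ∀ v k, φ (D v) (k + 1) = D (φ v (k + 1)) + φ v k)
    (y : ℕ →₀ M) (p k : ℕ) :
    φ (csubst D y k) p
      = ∑ i ∈ range (p + 1), csubst2 D (y.mapRange (fun x => φ x i) (by simp)) (p - i) k := by
  have hmap : ∀ i q, csubst2 D (y.mapRange (fun x => φ x i) (by simp)) q k
      = ∑ j ∈ y.support, negShift D j q k (φ (y j) i) := fun i q => by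
    rw [csubst2, Finsupp.sum_mapRange_index fun j => by simp]
    rfl
  simp only [hmap]
  rw [← sum_range_reflect]
  simp only [csubst, Finsupp.sum, map_sum, map_smul, Finsupp.finsetSum_apply,
    Finsupp.smul_apply, apply_pow_right_eq D φ h0 h1, Finset.smul_sum, smul_smul]
  rw [Finset.sum_comm]
  refine sum_congr rfl fun t ht => sum_congr rfl fun j _ => ?_
  have htp := mem_range.1 ht
  rw [show p - (p + 1 - 1 - t) = t by omega, show p + 1 - 1 - t = p - t by omega, negShift,
    LinearMap.smul_apply, Nat.sub_right_comm, mul_assoc, ← Nat.cast_mul, mul_assoc,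
    ← Nat.cast_mul, Nat.choose_mul_choose_sub_comm]

theorem resubst_apply_csubst (D : Module.End ℂ M) (φ : M →ₗ[ℂ] (ℕ →₀ M))
    (h0 : ∀ v, φ (D v) 0 = D (φ v 0)) (h1 : ∀ v k, φ (D v) (k + 1) = D (φ v (k + 1)) + φ v k)
    (y : ℕ →₀ M) {B : ℕ} (hB : ∀ j ∈ y.support, j ≤ B) (n m : ℕ) :
    resubst D B (fun p k => φ (csubst D y k) p) n m = φ (y m) n := by
  simp_rw [apply_csubst_eq_sum_csubst2 D φ h0 h1]
  rw [resubst_sum_csubst2 D _ fun i _ j hj => hB j (Finsupp.support_mapRange hj),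
    Finsupp.mapRange_apply]

/-- Left sesquilinearity turns `∂` into `-λ-μ`, so that `X(f(-λ-∂))_{λ+μ} = X(f(μ))_{λ+μ}`. -/
theorem sum_choose_smul_apply_csubst (D : Module.End ℂ A) (l : A →ₗ[ℂ] M →ₗ[ℂ] (ℕ →₀ M))
    (h0 : ∀ c v, l (D c) v 0 = 0) (h1 : ∀ c v k, l (D c) v (k + 1) = - l c v k)
    (f : ℕ →₀ A) (v : M) (n m : ℕ) :
    ∑ i ∈ range (n + 1), (((m + n - i).choose (n - i) : ℕ) : ℂ) • l (csubst D f i) v (m + n - i)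
      = ∑ i ∈ range (m + 1), (((n + m - i).choose (m - i) : ℕ) : ℂ) • l (f i) v (n + m - i) := by
  rw [sum_range_eq_sum_support_ite f
    (fun i x => (((n + m - i).choose (m - i) : ℕ) : ℂ) • l x v (n + m - i)) fun i => by simp]
  simp only [csubst, Finsupp.sum, map_sum, map_smul, LinearMap.sum_apply, LinearMap.smul_apply,
    Finsupp.finsetSum_apply, Finsupp.smul_apply, Finset.smul_sum, smul_smul,
    apply_pow_left_eq D l h0 h1]
  rw [Finset.sum_comm]
  refine sum_congr rfl fun j _ => ?_
  by_cases hj : j ≤ m + n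
  · have hterm : ∀ i ∈ range (n + 1),
        ((((m + n - i).choose (n - i) : ℕ) : ℂ) * ((-1 : ℂ) ^ j * (j.choose i : ℂ)))
          • (if j - i ≤ m + n - i then (-1 : ℂ) ^ (j - i) • l (f j) v (m + n - i - (j - i))
            else 0)
        = ((-1 : ℂ) ^ i * (j.choose i : ℂ) * ((m + n - i).choose (n - i) : ℂ))
          • l (f j) v (m + n - j) := by
      intro i _
      rcases Nat.lt_or_ge j i with hji | hij
      · simp [Nat.choose_eq_zero_of_lt hji]
      rw [if_pos (by omega), smul_smul, show m + n - i - (j - i) = m + n - j by omega]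
      have hsign : (-1 : ℂ) ^ j * (-1 : ℂ) ^ (j - i) = (-1 : ℂ) ^ i := by
        rw [← pow_add]; exact neg_one_pow_congr (by simp only [Nat.even_iff]; omega)
      congr 1
      linear_combination ((m + n - i).choose (n - i) * j.choose i : ℂ) * hsign
    rw [sum_congr rfl hterm, ← sum_smul, alternating_sum_choose_mul_choose_add_sub hj]
    split_ifs with hjm
    · rw [← Nat.choose_symm (show m - j ≤ n + m - j by omega),
        show n + m - j - (m - j) = n by omega, show n + m - j = m + n - j by omega]
    · rw [Nat.choose_eq_zero_of_lt (show m + n - j < n by omega), Nat.cast_zero, zero_smul]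
  · rw [if_neg (by omega)]
    refine sum_eq_zero fun i hi => ?_
    rw [if_neg (by have := mem_range.1 hi; omega), smul_zero]

end Sesquilinear

section Representation

open Finset

variable {A M : Type} [AddCommGroup A] [Module ℂ A] [AddCommGroup M] [Module ℂ M]

theorem sum_choose_smul_apply_bracket (D : Module.End ℂ A) (mul : A →ₗ[ℂ] A →ₗ[ℂ] (ℕ →₀ A))
    (X : A →ₗ[ℂ] M →ₗ[ℂ] (ℕ →₀ M))
    (h0 : ∀ c v, X (D c) v 0 = 0) (h1 : ∀ c v k, X (D c) v (k + 1) = - X c v k)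
    (a b : A) (v : M) (n m : ℕ) :
    ∑ i ∈ range (n + 1), (((m + n - i).choose (n - i) : ℕ) : ℂ) •
        X (mul a b i - csubst D (mul b a) i) v (m + n - i)
      = comp2 mul X a b v n m - comp2 mul X b a v m n := by
  simp only [map_sub, LinearMap.sub_apply, Finsupp.sub_apply, smul_sub, sum_sub_distrib]
  rw [sum_choose_smul_apply_csubst D X h0 h1]
  rfl

/-- `r(a_λ b)_{λ+μ} v = r(b)_μ r(a)_λ v - r(b)_μ l(a)_λ v + l(a)_λ r(b)_μ v`: the second module
axiom, after the substitution `μ ↦ -λ-μ-∂` that undoes the one in its statement. -/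
theorem LSConfMod.comp2_r {S : LSConfAlg A} (Mo : LSConfMod S M) (a b : A) (v : M) (n m : ℕ) :
    comp2 S.mul Mo.r a b v n m
      = Mo.r b (Mo.r a v n) m - Mo.r b (Mo.l a v n) m + Mo.l a (Mo.r b v m) n := by
  let T := (range (n + 1)).biUnion (fun i => (Mo.r b (Mo.l a v i)).support
    ∪ (Mo.r b (Mo.r a v i)).support ∪ (Mo.r (S.mul a b i) v).support) ∪ (Mo.r b v).support
  obtain ⟨B, hB⟩ : ∃ B, ∀ j ∈ T, j ≤ B := ⟨T.sup id, fun j hj => le_sup (f := id) hj⟩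
  have hBi : ∀ i ≤ n, ∀ j, j ∈ (Mo.r b (Mo.l a v i)).support ∨ j ∈ (Mo.r b (Mo.r a v i)).support
      ∨ j ∈ (Mo.r (S.mul a b i) v).support → j ≤ B := fun i hi j hj =>
    hB j (mem_union_left _ (mem_biUnion.2 ⟨i, mem_range.2 (by omega), by
      simp only [mem_union]; tauto⟩))
  have key := congrArg (resubst Mo.DM B · n m) (funext₂ fun p k => Mo.compat_r a b v p k)
  simp only [resubst_sub] at key
  rw [resubst_sum_csubst2 Mo.DM _ (fun i hi j hj => hBi i hi j (Or.inl hj)),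
    resubst_apply_csubst Mo.DM (Mo.l a) (Mo.l_sesq_right_zero a) (Mo.l_sesq_right a) _
      (fun j hj => hB j (mem_union_right _ hj)),
    resubst_sum_csubst2 Mo.DM _ (fun i hi j hj => hBi i hi j (Or.inr (Or.inl hj))),
    resubst_csubst Mo.DM _ (fun i hi j hj => hBi i hi j (Or.inr (Or.inr hj)))] at key
  calc comp2 S.mul Mo.r a b v n m
      = Mo.r b (Mo.r a v n) m - (Mo.r b (Mo.r a v n) m - comp2 S.mul Mo.r a b v n m) := by abel
    _ = Mo.r b (Mo.r a v n) m - Mo.r b (Mo.l a v n) m + Mo.l a (Mo.r b v m) n := by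
      rw [comp2, ← key]; abel

end Representation

theorem l_minus_r_is_representation_general {A M : Type}
    [AddCommGroup A] [Module ℂ A] [AddCommGroup M] [Module ℂ M]
    (S : LSConfAlg A) (Mo : LSConfMod S M) :
    ∀ (a b : A) (v : M) (n m : ℕ),
      (∑ i ∈ Finset.range (n + 1), (((m + n - i).choose (n - i) : ℕ) : ℂ) •
          (Mo.l (S.mul a b i - csubst S.D (S.mul b a) i) v (m + n - i)
            - Mo.r (S.mul a b i - csubst S.D (S.mul b a) i) v (m + n - i)))
      = (Mo.l a (Mo.l b v m - Mo.r b v m) n - Mo.r a (Mo.l b v m - Mo.r b v m) n)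
        - (Mo.l b (Mo.l a v n - Mo.r a v n) m - Mo.r b (Mo.l a v n - Mo.r a v n) m) := by
  intro a b v n m
  simp only [smul_sub, Finset.sum_sub_distrib]
  rw [sum_choose_smul_apply_bracket S.D S.mul Mo.l Mo.l_sesq_left_zero Mo.l_sesq_left,
    sum_choose_smul_apply_bracket S.D S.mul Mo.r Mo.r_sesq_left_zero Mo.r_sesq_left,
    Mo.comp2_r a b, Mo.comp2_r b a, sub_eq_iff_eq_add.1 (Mo.compat_l a b v n m)]
  simp only [map_sub, Finsupp.sub_apply]
  abel

/-- for a finite module `(M, l, r)` over a left-symmetric conformal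
algebra `A`, the map `ρ = l - r` is a representation of the sub-adjacent Lie
conformal algebra `g(A)` (whose bracket is `[a_λ b] = a_λ b - b_{-λ-∂} a`). -/
theorem l_minus_r_is_representation {A M : Type}
    [AddCommGroup A] [Module ℂ A] [AddCommGroup M] [Module ℂ M]
    (S : LSConfAlg A) (Mo : LSConfMod S M)
    (hfin : ∃ s : Finset M, ∀ v : M,
      v ∈ Submodule.span ℂ {y : M | ∃ x ∈ s, ∃ n : ℕ, (Mo.DM ^ n) x = y}) :
    ∀ (a b : A) (v : M) (n m : ℕ),
      (∑ i ∈ Finset.range (n + 1), (((m + n - i).choose (n - i) : ℕ) : ℂ) •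
          (Mo.l (S.mul a b i - csubst S.D (S.mul b a) i) v (m + n - i)
            - Mo.r (S.mul a b i - csubst S.D (S.mul b a) i) v (m + n - i)))
      = (Mo.l a (Mo.l b v m - Mo.r b v m) n - Mo.r a (Mo.l b v m - Mo.r b v m) n)
        - (Mo.l b (Mo.l a v n - Mo.r a v n) m - Mo.r b (Mo.l a v n - Mo.r a v n) m) :=
  l_minus_r_is_representation_general S Mo
end
end

section
/- Let (V, [·,·], ∘) be a Gel'fand-Dorfman bialgebra, T a Rota-Baxter operator of weight α on (V, [·,·], ∘), and let the quadratic Lie conformal algebra R = C[∂]V have bracket [a_λ b] = ∂(b∘a) + λ(a∘b + b∘a) + [b,a]. Then the linear operator 𝒯 on the coefficient Lie algebra Coeff(R), defined by 𝒯(a_n) = T(a)_n for a ∈ V and n ∈ Z, is a Rota-Baxter operator of weight α on the Lie algebra Coeff(R). -/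
/-- let `(V, ⁅·,·⁆, ∘)` be a Gel'fand-Dorfman bialgebra and `t` a
Rota-Baxter operator of weight `α` on it.  The coefficient Lie algebra `Coeff(R)`
of the corresponding quadratic Lie conformal algebra `R = ℂ[∂]V` is axiomatized as
a complex Lie algebra `g` spanned by elements `φ n v` (`v ∈ V`, `n ∈ ℤ`) with
bracket `⁅v_m, w_n⁆ = ⁅w,v⁆_{m+n} + m (v∘w)_{m+n-1} - n (w∘v)_{m+n-1}`.
Then `𝒯(v_n) = (t v)_n` is a Rota-Baxter operator of weight `α` on `Coeff(R)`. -/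
theorem rota_baxter_coeff_of_quadratic
    {V : Type} [LieRing V] [LieAlgebra ℂ V]
    (nov : V →ₗ[ℂ] V →ₗ[ℂ] V)
    (hnov1 : ∀ a b c : V, nov (nov a b) c = nov (nov a c) b)
    (hnov2 : ∀ a b c : V,
      nov (nov a b) c - nov a (nov b c) = nov (nov b a) c - nov b (nov a c))
    (hcompat : ∀ a b c : V,
      ⁅nov a b, c⁆ + nov ⁅a, b⁆ c - nov a ⁅b, c⁆ - ⁅nov a c, b⁆ - nov ⁅a, c⁆ b = 0)
    (α : ℂ) (t : V →ₗ[ℂ] V)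
    (hRBlie : ∀ a b : V, ⁅t a, t b⁆ = t ⁅t a, b⁆ + t ⁅a, t b⁆ + α • t ⁅a, b⁆)
    (hRBnov : ∀ a b : V, nov (t a) (t b)
        = t (nov (t a) b) + t (nov a (t b)) + α • t (nov a b))
    (g : Type) [LieRing g] [LieAlgebra ℂ g]
    (φ : ℤ → V →ₗ[ℂ] g)
    (hspan : ∀ x : g, x ∈ Submodule.span ℂ (⋃ n : ℤ, Set.range (φ n)))
    (hbr : ∀ (v w : V) (m n : ℤ),
      ⁅φ m v, φ n w⁆ = φ (m + n) ⁅w, v⁆ + (m : ℂ) • φ (m + n - 1) (nov v w)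
        - (n : ℂ) • φ (m + n - 1) (nov w v))
    (𝒯 : g →ₗ[ℂ] g) (h𝒯 : ∀ (n : ℤ) (v : V), 𝒯 (φ n v) = φ n (t v)) :
    ∀ x y : g, ⁅𝒯 x, 𝒯 y⁆ = 𝒯 ⁅𝒯 x, y⁆ + 𝒯 ⁅x, 𝒯 y⁆ + α • 𝒯 ⁅x, y⁆ := by

  -- the identity on generators
  have key : ∀ (m n : ℤ) (v w : V),
      ⁅𝒯 (φ m v), 𝒯 (φ n w)⁆ = 𝒯 ⁅𝒯 (φ m v), φ n w⁆ + 𝒯 ⁅φ m v, 𝒯 (φ n w)⁆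
        + α • 𝒯 ⁅φ m v, φ n w⁆ := by
    intro m n v w
    rw [h𝒯, h𝒯, hbr, hbr, hbr, hbr, hRBlie w v, hRBnov v w, hRBnov w v]
    simp only [map_add, map_sub, map_smul, h𝒯, smul_add, smul_sub, smul_smul,
      mul_comm α]
    abel
  -- linearity: reduce to generators
  set S : Set g := ⋃ n : ℤ, Set.range (φ n) with hS
  have step1 : ∀ x ∈ S, ∀ y : g,
      ⁅𝒯 x, 𝒯 y⁆ = 𝒯 ⁅𝒯 x, y⁆ + 𝒯 ⁅x, 𝒯 y⁆ + α • 𝒯 ⁅x, y⁆ := by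
    intro x hx y
    induction hspan y using Submodule.span_induction with
    | mem z hz =>
      obtain ⟨m, v, rfl⟩ := by simpa [hS] using hx
      obtain ⟨n, w, rfl⟩ := by simpa [hS] using hz
      exact key m n v w
    | zero => simp
    | add y1 y2 _ _ h1 h2 =>
      simp only [map_add, lie_add, add_lie, h1, h2, smul_add]
      abel
    | smul c y1 _ h1 =>
      simp only [map_smul, lie_smul, smul_lie, h1, smul_add, smul_comm c α]
  intro x y
  induction hspan x using Submodule.span_induction with
  | mem z hz => exact step1 z hz y
  | zero => simp
  | add x1 x2 _ _ h1 h2 =>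
    simp only [map_add, lie_add, add_lie, h1, h2, smul_add]
    abel
  | smul c x1 _ h1 =>
    simp only [map_smul, lie_smul, smul_lie, h1, smul_add, smul_comm c α]
end
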